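/- A bit-flip on qubit 5 of the encoded state produces error syndrome 1010 and a bit-flipped data qubit: for every c = (c(0), c(1)) ∈ ℂ² there is a nonzero complex scalar α independent of c such that T(B₅(f(c))) = α · |1010⟩ ⊗ (c(0)|1⟩ + c(1)|0⟩); applying σ_X to the data qubit then restores the original state. -/

import Mathlib

open scoped BigOperators

noncomputable section

/-- The 5-qubit state space `V₅ = (Fin 5 → Fin 2) → ℂ ≅ ℂ^32` with the standard
Hermitian inner product. -/
abbrev V5 : Type := EuclideanSpace ℂ (Fin 5 → Fin 2)

/-- The phase exponent `γ(x,y) = x(y₀+y₁+y₂) + y₀y₁ + y₀y₃ + y₁y₄ + y₂y₃ + y₂y₄ + y₃y₄`,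
read modulo 2 via `(-1)^·`. -/
def gam (x : Fin 2) (y : Fin 5 → Fin 2) : ℕ :=
  x.val * ((y 0).val + (y 1).val + (y 2).val)
    + (y 0).val * (y 1).val + (y 0).val * (y 3).val + (y 1).val * (y 4).val
    + (y 2).val * (y 3).val + (y 2).val * (y 4).val + (y 3).val * (y 4).val

/-- The graph-code encoding `f : ℂ² → V₅`, `f(c)(y) = Σ_x (−1)^{γ(x,y)} c(x)`
(normalization factors omitted). -/
def enc (c : Fin 2 → ℂ) : V5 := WithLp.toLp 2 (fun y => ∑ x : Fin 2, (-1 : ℂ) ^ gam x y * c x)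

/-- The decoding phase exponent `θ`, with `z = (l₀, l₁, l₃, l₄, x̂)`. -/
def theta (y z : Fin 5 → Fin 2) : ℕ :=
  (z 4).val * ((y 0).val + (y 1).val + (y 2).val)
    + (y 0).val * (y 1).val + (y 0).val * (y 3).val + (y 1).val * (y 4).val
    + (y 2).val * (y 3).val + (y 2).val * (y 4).val + (y 3).val * (y 4).val
    + (y 0).val * (z 0).val + (y 1).val * (z 1).val + (y 3).val * (z 2).val
    + (y 4).val * (z 3).val

/-- The graph decoding operator `T : V₅ → V₅`,
`T|y⟩ = Σ_{l₀l₁l₃l₄, x̂} (−1)^θ |l₀l₁l₃l₄x̂⟩`. -/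
def dec (ψ : V5) : V5 := WithLp.toLp 2 (fun z => ∑ y : Fin 5 → Fin 2, (-1 : ℂ) ^ theta y z * ψ y)

/-- The product state `|s₀s₁s₂s₃⟩ ⊗ (a|0⟩ + b|1⟩)` in `V₅`: four syndrome qubits
followed by one data qubit. -/
def synData (s : Fin 4 → Fin 2) (a b : ℂ) : V5 :=
  WithLp.toLp 2 (fun (y : Fin 5 → Fin 2) => (if y 0 = s 0 ∧ y 1 = s 1 ∧ y 2 = s 2 ∧ y 3 = s 3 then (1 : ℂ) else 0)
    * (if y 4 = 0 then a else b))

/-- Bit-flip (Pauli `σ_X`) on qubit `i` (0-indexed: qubit `j` of the paper is `i = j - 1`). -/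
def bitFlip (i : Fin 5) (ψ : V5) : V5 := WithLp.toLp 2 (fun y => ψ (Function.update y i (1 - y i)))

/-- Phase-flip (Pauli `σ_Z`) on qubit `i` (0-indexed). -/
def phaseFlip (i : Fin 5) (ψ : V5) : V5 := WithLp.toLp 2 (fun y => (-1 : ℂ) ^ (y i).val * ψ y)

/-!
Flipping `y₄` adds `y₁ + y₂ + y₃` to `γ(x, y)`, so in the amplitude of `T(B₅ f(c))` at `|z⟩` the
quadratic parts of `θ` and `γ` cancel modulo 2 and only a linear phase `⟨a(x, z), y⟩` survives.
The sum over `y` of `(-1)^⟨a, y⟩` is a character sum over `(ℤ/2)⁵`: it is `32` when `a ≡ 0` and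
`0` otherwise, and `a(x, z) ≡ 0` exactly when `z = 1010 z₄` and `x = 1 - z₄`.
-/

theorem sum_fin_two_neg_one_pow_mul_val {R : Type*} [Ring R] (a : ℕ) :
    ∑ b : Fin 2, (-1 : R) ^ (a * b.val) = if Even a then 2 else 0 := by
  rcases Nat.even_or_odd a with ha | ha
  · simp [ha]
  · simp [Fin.sum_univ_two, ha.neg_one_pow, Nat.not_even_iff_odd.mpr ha]

theorem sum_neg_one_pow_sum_mul_val {R : Type*} [CommRing R] {ι : Type*} [Fintype ι]
    [DecidableEq ι] (a : ι → ℕ) :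
    ∑ y : ι → Fin 2, (-1 : R) ^ (∑ i, a i * (y i).val) =
      if ∀ i, Even (a i) then 2 ^ Fintype.card ι else 0 := by
  simp_rw [← Finset.prod_pow_eq_pow_sum]
  rw [← Fintype.prod_sum fun i (b : Fin 2) => (-1 : R) ^ (a i * b.val)]
  simp_rw [sum_fin_two_neg_one_pow_mul_val, Finset.prod_ite_zero, Finset.prod_const,
    Finset.mem_univ, true_implies, Finset.card_univ]

/-- The coefficients of the linear phase `⟨a(x, z), y⟩` that the `x`-term of `f(c)` leaves in the
amplitude of `T(B₅ f(c))` at `|z⟩`. -/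
def bitFlip4Phase (x : Fin 2) (z : Fin 5 → Fin 2) : Fin 5 → ℕ :=
  ![x.val + (z 4).val + (z 0).val, x.val + (z 4).val + 1 + (z 1).val, x.val + (z 4).val + 1,
    1 + (z 2).val, (z 3).val]

theorem theta_add_gam_update_four (x : Fin 2) (y z : Fin 5 → Fin 2) :
    theta y z + gam x (Function.update y 4 (1 - y 4)) =
      ∑ i, bitFlip4Phase x z i * (y i).val
        + 2 * ((y 0).val * (y 1).val + (y 0).val * (y 3).val + (y 2).val * (y 3).val) := by
  have flip_add : (1 - y 4).val + (y 4).val = 1 := by generalize y 4 = b; revert b; decide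
  simp only [theta, gam, bitFlip4Phase, Fin.sum_univ_five, Function.update_apply, Fin.reduceEq,
    ↓reduceIte, Matrix.cons_val]
  linear_combination ((y 1).val + (y 2).val + (y 3).val) * flip_add

theorem dec_bitFlip_four_enc_apply (c : Fin 2 → ℂ) (z : Fin 5 → Fin 2) :
    dec (bitFlip 4 (enc c)) z =
      ∑ x, c x * ∑ y : Fin 5 → Fin 2, (-1 : ℂ) ^ (∑ i, bitFlip4Phase x z i * (y i).val) := by
  simp only [dec, bitFlip, enc, PiLp.toLp_apply, Finset.mul_sum]
  rw [Finset.sum_comm]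
  refine Finset.sum_congr rfl fun y _ => Finset.sum_congr rfl fun x _ => ?_
  rw [← mul_assoc, ← pow_add, theta_add_gam_update_four, pow_add, pow_mul, neg_one_sq, one_pow,
    mul_one, mul_comm]

theorem even_bitFlip4Phase_iff (x : Fin 2) (z : Fin 5 → Fin 2) :
    (∀ i, Even (bitFlip4Phase x z i)) ↔
      (z 0 = 1 ∧ z 1 = 0 ∧ z 2 = 1 ∧ z 3 = 0) ∧ x = 1 - z 4 := by
  revert x z
  decide

theorem dec_bitFlip_four_enc (c : Fin 2 → ℂ) :
    dec (bitFlip 4 (enc c)) = (32 : ℂ) • synData ![1, 0, 1, 0] (c 1) (c 0) := by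
  ext z
  simp_rw [dec_bitFlip_four_enc_apply, sum_neg_one_pow_sum_mul_val, even_bitFlip4Phase_iff]
  by_cases hs : z 0 = 1 ∧ z 1 = 0 ∧ z 2 = 1 ∧ z 3 = 0
  · simp only [hs, true_and, Fintype.card_fin, mul_ite, mul_zero, Finset.sum_ite_eq',
      Finset.mem_univ, ↓reduceIte, synData, Matrix.cons_val_zero, Matrix.cons_val_one,
      Matrix.cons_val, and_self, PiLp.smul_apply, one_mul, smul_eq_mul]
    generalize z 4 = b
    fin_cases b <;> norm_num [mul_comm]
  · simp [hs, synData]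

/-- A bit-flip on qubit 5 produces syndrome `1010` and a bit-flipped data qubit: `T(B₅ f(c)) = α |1010⟩ ⊗ (c(0)|1⟩ + c(1)|0⟩)` with `α ≠ 0` independent of `c`; applying `σ_X` to the data qubit restores the original state. -/
theorem bit_flip_qubit5_syndrome :
    ∃ α : ℂ, α ≠ 0 ∧ ∀ c : Fin 2 → ℂ,
      dec (bitFlip 4 (enc c)) = α • synData ![1, 0, 1, 0] (c 1) (c 0) :=
  ⟨32, by norm_num, dec_bitFlip_four_enc⟩
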